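/- arXiv:1402.4037 — 6 statements merged into one kernel-verified Lean document; each statement's English description precedes it below -/
import Mathlib

section
/- Let Ĝ = (V,Ê) be a finite connected simple graph, let T ⊆ V × V be any set of vertex pairs, and let {a,b} be a non-edge of Ĝ such that {a,b} ∉ S_{u,v}(Ĝ) for every (u,v) ∈ T. Let Ĝ' be the graph obtained from Ĝ by adding the edge {a,b}. Then the distance in Ĝ' between u and v equals δ̂(u,v) for every (u,v) ∈ T. -/
open SimpleGraph

namespace SimpleGraph

variable {V : Type*} {G : SimpleGraph V} {a b : V}

/-- Induction on the walk: a step along an old edge changes each of the three candidate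
distances by at most one, and a step along the new edge `a - b` starts the walk at `a` or at `b`,
where one of the two detour terms is exactly one plus the length of the rest. -/
lemma Connected.min_dist_le_length_of_walk_sup_edge (hG : G.Connected) {u v : V}
    (W : (G ⊔ edge a b).Walk u v) :
    min (G.dist u v) (min (G.dist u a + G.dist b v + 1) (G.dist u b + G.dist a v + 1)) ≤
      W.length := by
  induction W with
  | nil => simp
  | @cons u w v huw W ih =>
    rw [Walk.length_cons]
    rcases huw with huw | huw
    · have hdist : G.dist u w = 1 := dist_eq_one_iff_adj.mpr huw
      have := hG.dist_triangle (u := u) (v := w) (w := v)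
      have := hG.dist_triangle (u := u) (v := w) (w := a)
      have := hG.dist_triangle (u := u) (v := w) (w := b)
      omega
    · obtain ⟨⟨rfl, rfl⟩ | ⟨rfl, rfl⟩, -⟩ := (edge_adj a b u w).mp huw <;>
      · simp only [dist_self] at ih ⊢
        omega

lemma Connected.min_dist_le_dist_sup_edge (hG : G.Connected) (u v : V) :
    min (G.dist u v) (min (G.dist u a + G.dist b v + 1) (G.dist u b + G.dist a v + 1)) ≤
      (G ⊔ edge a b).dist u v := by
  obtain ⟨W, hW⟩ := ((hG u v).mono le_sup_left).exists_walk_length_eq_dist (G := G ⊔ edge a b)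
  exact hW ▸ hG.min_dist_le_length_of_walk_sup_edge W

end SimpleGraph

theorem stmt_1_general {V : Type*}
    (Ghat : SimpleGraph V) (hGhat : Ghat.Connected)
    (T : Set (V × V)) (a b : V)
    (hT : ∀ p ∈ T,
      ¬ (Ghat.dist p.1 a + Ghat.dist b p.2 + 1 < Ghat.dist p.1 p.2) ∧
      ¬ (Ghat.dist p.1 b + Ghat.dist a p.2 + 1 < Ghat.dist p.1 p.2)) :
    ∀ p ∈ T,
      (Ghat ⊔ SimpleGraph.fromEdgeSet {s(a, b)}).dist p.1 p.2 = Ghat.dist p.1 p.2 := by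
  intro p hp
  obtain ⟨hvia_ab, hvia_ba⟩ := hT p hp
  change (Ghat ⊔ edge a b).dist p.1 p.2 = Ghat.dist p.1 p.2
  refine le_antisymm ((hGhat p.1 p.2).dist_anti le_sup_left) ?_
  have := hGhat.min_dist_le_dist_sup_edge (a := a) (b := b) p.1 p.2
  omega

theorem stmt_1 {V : Type*} [Fintype V] [DecidableEq V]
    (Ghat : SimpleGraph V) (hGhat : Ghat.Connected)
    (T : Set (V × V)) (a b : V) (hab : a ≠ b) (hnedge : ¬ Ghat.Adj a b)
    (hT : ∀ p ∈ T,
      ¬ (Ghat.dist p.1 a + Ghat.dist b p.2 + 1 < Ghat.dist p.1 p.2) ∧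
      ¬ (Ghat.dist p.1 b + Ghat.dist a p.2 + 1 < Ghat.dist p.1 p.2)) :
    ∀ p ∈ T,
      (Ghat ⊔ SimpleGraph.fromEdgeSet {s(a, b)}).dist p.1 p.2 = Ghat.dist p.1 p.2 :=
  stmt_1_general Ghat hGhat T a b hT
end

section
/- Let G = (V,E) be a finite connected simple graph, let U ⊆ V, and let A ⊆ V be nonempty. Then for every edge {u,v} of G with u,v ∈ U, there exists a ∈ A such that both u ∈ D_a and v ∈ D_a; that is, the subgraphs G[D_a] for a ∈ A together cover every edge of the induced subgraph G[U]. -/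
/-!
Let `a ∈ A` realise `δ(A, u) = d` for the endpoint `u` of the edge closer to `A`. If `d ≤ 1`,
both endpoints lie in `N₂(a)`. Otherwise the vertex `b` two steps from `a` along a geodesic from
`a` to `u` lies in `N₂(a)` and satisfies `δ(b, u) ≤ d - 2` and `δ(b, v) ≤ d - 1`, so both endpoints
lie in `C_A(b)` because `d ≤ δ(A, v)`.
-/

open SimpleGraph

/-- Distance from a set of vertices: `δ(A, v) = min_{a ∈ A} δ(a, v)`. -/
noncomputable def setDist {V : Type*} (G : SimpleGraph V) (A : Set V) (v : V) : ℕ :=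
  sInf {d | ∃ a ∈ A, G.dist a v = d}

/-- Voronoi-type cell: `C_A(w) = {v : δ(w,v) < δ(A,v)}`. -/
noncomputable def cell {V : Type*} (G : SimpleGraph V) (A : Set V) (w : V) : Set V :=
  {v | G.dist w v < setDist G A v}

/-- `N₂(a) = {u : δ(u,a) ≤ 2}`. -/
noncomputable def ball2 {V : Type*} (G : SimpleGraph V) (a : V) : Set V :=
  {u | G.dist u a ≤ 2}

/-- Extended Voronoi cell `D_a = ((⋃ {C_A(b) : b ∈ N₂(a)}) ∪ N₂(a)) ∩ U`. -/
noncomputable def extCell {V : Type*} (G : SimpleGraph V) (A : Set V) (U : Set V) (a : V) :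
    Set V :=
  ((⋃ b ∈ ball2 G a, cell G A b) ∪ ball2 G a) ∩ U

section

variable {V : Type*} {G : SimpleGraph V}

lemma SimpleGraph.Reachable.exists_dist_le_and_dist_le_sub {a u : V} (h : G.Reachable a u)
    (k : ℕ) : ∃ b, G.dist a b ≤ k ∧ G.dist b u ≤ G.dist a u - k := by
  obtain ⟨p, hp⟩ := h.exists_walk_length_eq_dist
  refine ⟨p.getVert k, ?_, ?_⟩
  · calc G.dist a (p.getVert k) ≤ (p.take k).length := dist_le _
      _ ≤ k := by rw [Walk.take_length]; exact min_le_left _ _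
  · calc G.dist (p.getVert k) u ≤ (p.drop k).length := dist_le _
      _ = G.dist a u - k := by rw [Walk.drop_length, hp]

lemma exists_dist_eq_setDist {A : Set V} (hA : A.Nonempty) (v : V) :
    ∃ a ∈ A, G.dist a v = setDist G A v :=
  Nat.sInf_mem (hA.image (G.dist · v))

lemma mem_extCell_of_mem_ball2 {A U : Set V} {a x : V} (hx : x ∈ ball2 G a) (hxU : x ∈ U) :
    x ∈ extCell G A U a :=
  ⟨Or.inr hx, hxU⟩

lemma mem_extCell_of_mem_cell {A U : Set V} {a b x : V} (hb : b ∈ ball2 G a)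
    (hx : x ∈ cell G A b) (hxU : x ∈ U) : x ∈ extCell G A U a :=
  ⟨Or.inl (Set.mem_biUnion hb hx), hxU⟩

lemma exists_mem_extCell_of_adj_of_setDist_le (hG : G.Connected) {U A : Set V}
    (hA : A.Nonempty) {u v : V} (huv : G.Adj u v) (hu : u ∈ U) (hv : v ∈ U)
    (hle : setDist G A u ≤ setDist G A v) :
    ∃ a ∈ A, u ∈ extCell G A U a ∧ v ∈ extCell G A U a := by
  obtain ⟨a, haA, had⟩ := exists_dist_eq_setDist (G := G) hA u
  refine ⟨a, haA, ?_⟩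
  have hvu : G.dist v u = 1 := dist_eq_one_iff_adj.mpr huv.symm
  by_cases hd : G.dist a u ≤ 1
  · have hua₁ : G.dist u a ≤ 1 := by rwa [SimpleGraph.dist_comm]
    have hua : G.dist u a ≤ 2 := by omega
    have hva : G.dist v a ≤ 2 := by
      have := hG.dist_triangle (u := v) (v := u) (w := a)
      omega
    exact ⟨mem_extCell_of_mem_ball2 hua hu, mem_extCell_of_mem_ball2 hva hv⟩
  · obtain ⟨b, hab, hbu⟩ := (hG.preconnected a u).exists_dist_le_and_dist_le_sub 2
    have hba : b ∈ ball2 G a := show G.dist b a ≤ 2 by rwa [SimpleGraph.dist_comm]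
    have hbv : G.dist b v ≤ G.dist b u + 1 := by
      have := hG.dist_triangle (u := b) (v := u) (w := v)
      rwa [SimpleGraph.dist_comm (u := u), hvu] at this
    have hub : u ∈ cell G A b := show G.dist b u < setDist G A u by omega
    have hvb : v ∈ cell G A b := show G.dist b v < setDist G A v by omega
    exact ⟨mem_extCell_of_mem_cell hba hub hu, mem_extCell_of_mem_cell hba hvb hv⟩

end

theorem stmt_3_general {V : Type*} (G : SimpleGraph V) (hG : G.Connected)
    (U : Set V) (A : Set V) (hA : A.Nonempty) :
    ∀ u v : V, G.Adj u v → u ∈ U → v ∈ U →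
      ∃ a ∈ A, u ∈ extCell G A U a ∧ v ∈ extCell G A U a := by
  intro u v huv hu hv
  rcases le_total (setDist G A u) (setDist G A v) with h | h
  · exact exists_mem_extCell_of_adj_of_setDist_le hG hA huv hu hv h
  · obtain ⟨a, haA, hva, hua⟩ := exists_mem_extCell_of_adj_of_setDist_le hG hA huv.symm hv hu h
    exact ⟨a, haA, hua, hva⟩

theorem stmt_3 {V : Type*} [Fintype V] (G : SimpleGraph V) (hG : G.Connected)
    (U : Set V) (A : Set V) (hA : A.Nonempty) :
    ∀ u v : V, G.Adj u v → u ∈ U → v ∈ U →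
      ∃ a ∈ A, u ∈ extCell G A U a ∧ v ∈ extCell G A U a :=
  stmt_3_general G hG U A hA
end

section
/- Let G = (V,E) and Ĝ = (V,Ê) be finite connected simple graphs on the same vertex set with Ê ⊆ E, let U ⊆ V, and let A ⊆ V be nonempty. If δ(u,v) = δ̂(u,v) for every pair (u,v) with u ∈ ⋃_{a∈A} N̂₂(a) and v ∈ U, then D_a = D̂_a for every a ∈ A. -/
/-!
Distances from `A` to `U` agree in both graphs, hence so do the set distances `δ(A, v)` for
`v ∈ U`. The inclusion `D̂_a ⊆ D_a` then follows because `δ ≤ δ̂` and distances from `N̂₂(a)`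
to `U` agree. For `D_a ⊆ D̂_a`, if `v ∈ C_A(b)` with `δ(a, b) ≤ 2`, let `c` be the vertex two
steps from `a` on a `Ĝ`-geodesic to `v`; then `δ̂(c, v) = δ(a, v) - 2 ≤ δ(b, v) < δ̂(A, v)`,
so `v ∈ Ĉ_A(c)` with `c ∈ N̂₂(a)`.
-/

open SimpleGraph

theorem SimpleGraph.Connected.exists_dist_le_dist_eq_sub {V : Type*} {G : SimpleGraph V}
    (hG : G.Connected) (u v : V) (k : ℕ) :
    ∃ w, G.dist u w ≤ k ∧ G.dist w v = G.dist u v - k := by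
  obtain ⟨p, hp⟩ := hG.exists_walk_length_eq_dist u v
  have hfirst : G.dist u (p.getVert k) ≤ k :=
    (dist_le (p.take k)).trans (by simp [Walk.take_length])
  have hlast : G.dist (p.getVert k) v ≤ G.dist u v - k :=
    (dist_le (p.drop k)).trans (by simp [Walk.drop_length, hp])
  have htri : G.dist u v ≤ G.dist u (p.getVert k) + G.dist (p.getVert k) v := hG.dist_triangle
  exact ⟨p.getVert k, hfirst, by omega⟩

section ExtCell

variable {V : Type*} {G H : SimpleGraph V} {A U : Set V} {a : V}

theorem setDist_congr {v : V} (h : ∀ a ∈ A, G.dist a v = H.dist a v) :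
    setDist G A v = setDist H A v := by
  unfold setDist
  congr 1
  ext d
  exact exists_congr fun a => and_congr_right fun ha => by rw [h a ha]

theorem ball2_mono (hH : H.Connected) (hle : H ≤ G) (a : V) : ball2 H a ⊆ ball2 G a :=
  fun _ hu => ((hH.preconnected _ _).dist_anti hle).trans hu

theorem extCell_subset_of_dist_eq (hG : G.Connected) (hH : H.Connected)
    (hA : ∀ a ∈ A, ∀ v ∈ U, G.dist a v = H.dist a v) (ha : a ∈ A) :
    extCell G A U a ⊆ extCell H A U a := by
  rintro v ⟨hv | hv, hvU⟩
  · obtain ⟨b, hba, hvb⟩ := Set.mem_iUnion₂.mp hv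
    obtain ⟨c, hac, hcv⟩ := hH.exists_dist_le_dist_eq_sub a v 2
    have htri : G.dist a v ≤ G.dist a b + G.dist b v := hG.dist_triangle
    have hab : G.dist a b ≤ 2 := by rw [dist_comm]; exact hba
    have hav := hA a ha v hvU
    have hset := setDist_congr (hA · · v hvU)
    refine ⟨Or.inl (Set.mem_iUnion₂.mpr ⟨c, ?_, ?_⟩), hvU⟩
    · change H.dist c a ≤ 2
      rwa [dist_comm]
    · change H.dist c v < setDist H A v
      change G.dist b v < setDist G A v at hvb
      omega
  · refine ⟨Or.inr ?_, hvU⟩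
    change H.dist v a ≤ 2
    rwa [dist_comm, ← hA a ha v hvU, dist_comm]

theorem extCell_subset_of_le (hH : H.Connected) (hle : H ≤ G)
    (hball : ∀ u ∈ ball2 H a, ∀ v ∈ U, G.dist u v = H.dist u v)
    (hA : ∀ a ∈ A, ∀ v ∈ U, G.dist a v = H.dist a v) :
    extCell H A U a ⊆ extCell G A U a := by
  rintro v ⟨hv | hv, hvU⟩
  · obtain ⟨b, hba, hvb⟩ := Set.mem_iUnion₂.mp hv
    refine ⟨Or.inl (Set.mem_iUnion₂.mpr ⟨b, ball2_mono hH hle a hba, ?_⟩), hvU⟩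
    change G.dist b v < setDist G A v
    rw [hball b hba v hvU, setDist_congr (hA · · v hvU)]
    exact hvb
  · exact ⟨Or.inr (ball2_mono hH hle a hv), hvU⟩

end ExtCell

theorem stmt_4_general {V : Type*}
    (G Ghat : SimpleGraph V) (hG : G.Connected) (hGhat : Ghat.Connected)
    (hsub : Ghat ≤ G) (U : Set V) (A : Set V)
    (hdist : ∀ u v : V, u ∈ ⋃ a ∈ A, ball2 Ghat a → v ∈ U →
      G.dist u v = Ghat.dist u v) :
    ∀ a ∈ A, extCell G A U a = extCell Ghat A U a := by
  intro a ha
  have hball : ∀ u ∈ ball2 Ghat a, ∀ v ∈ U, G.dist u v = Ghat.dist u v :=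
    fun u hu v hv => hdist u v (Set.mem_iUnion₂.mpr ⟨a, ha, hu⟩) hv
  have hA : ∀ a ∈ A, ∀ v ∈ U, G.dist a v = Ghat.dist a v := fun a' ha' v hv =>
    hdist a' v (Set.mem_iUnion₂.mpr ⟨a', ha', by simp [ball2]⟩) hv
  exact (extCell_subset_of_dist_eq hG hGhat hA ha).antisymm
    (extCell_subset_of_le hGhat hsub hball hA)

theorem stmt_4 {V : Type*} [Fintype V]
    (G Ghat : SimpleGraph V) (hG : G.Connected) (hGhat : Ghat.Connected)
    (hsub : Ghat ≤ G) (U : Set V) (A : Set V) (hA : A.Nonempty)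
    (hdist : ∀ u v : V, u ∈ ⋃ a ∈ A, ball2 Ghat a → v ∈ U →
      G.dist u v = Ghat.dist u v) :
    ∀ a ∈ A, extCell G A U a = extCell Ghat A U a :=
  stmt_4_general G Ghat hG hGhat hsub U A hdist
end

section
/- There is a universal constant c > 0 with the following property. For every finite connected simple graph G = (V,E) on n ≥ 2 vertices with maximum degree Δ and treewidth tw, there exists a set T ⊆ V × V of vertex pairs with |T| ≤ c·Δ·(Δ + tw·log n)·n·log n such that every non-edge {a,b} of G belongs to S_{u,v}(G) for some (u,v) ∈ T. -/
open SimpleGraph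

/-- A tree decomposition of a graph `G`: a tree `T` on nodes `ι` with a bag for each node,
such that for every vertex the nodes whose bags contain it form a nonempty connected
subtree, and every edge of `G` is contained in some bag. -/
structure TreeDecomp {V : Type u} (G : SimpleGraph V) (ι : Type v) where
  tree : SimpleGraph ι
  isTree : tree.IsTree
  bag : ι → Set V
  bag_conn : ∀ v : V, (tree.induce {i | v ∈ bag i}).Connected
  bag_edge : ∀ ⦃u v : V⦄, G.Adj u v → ∃ i, u ∈ bag i ∧ v ∈ bag i

/-- `G` has a tree decomposition of width at most `k`. -/
def HasTreewidthAtMost {V : Type u} (G : SimpleGraph V) (k : ℕ) : Prop :=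
  ∃ (ι : Type) (_ : Fintype ι) (D : TreeDecomp G ι), ∀ i : ι, (D.bag i).ncard ≤ k + 1

/-- The treewidth of `G`: the minimum width over all tree decompositions. -/
noncomputable def treewidth {V : Type u} (G : SimpleGraph V) : ℕ :=
  sInf {k | HasTreewidthAtMost G k}

/-!
The bag at a centroid of a tree decomposition of width `tw`, weighting each node by the vertices
of `R` it is assigned, is a balanced separator `S`: every component of `R \ S` has at most `|R|/2`
vertices. A shortest path `a … b` of length at least two inside `R` either meets `S`, and then a
query from the closed neighbourhood `N[S]` to `a` or `b` certifies `{a, b}`, or it stays inside one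
component of `R \ S`, where we recurse. Each level of the recursion costs at most
`|N[S]| |R| ≤ (tw + 1)(Δ + 1)|R|` queries, and there are at most `log₂ n + 1` levels.
-/

open Finset
open scoped Classical

lemma Nat.log_two_add_one_le_of_two_mul_le {m n : ℕ} (hm : 0 < m) (h : 2 * m ≤ n) :
    Nat.log 2 m + 1 ≤ Nat.log 2 n := by
  rw [← Nat.log_mul_base one_lt_two hm.ne', mul_comm]
  exact Nat.log_mono_right h

namespace SimpleGraph

section Tree

variable {ι : Type*} {T : SimpleGraph ι}

def branch (T : SimpleGraph ι) (c j : ι) : Set ι :=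
  {t | (T.deleteEdges {s(c, j)}).Reachable t j}

lemma IsTree.disjoint_branch (hT : T.IsTree) {c j : ι} (h : T.Adj c j) :
    Disjoint (T.branch c j) (T.branch j c) := by
  have hbridge : T.IsBridge s(c, j) := isAcyclic_iff_forall_isBridge.mp hT.2 h
  refine Set.disjoint_left.mpr fun t hcj hjc => isBridge_iff.mp hbridge ?_
  rw [branch, Set.mem_ofPred_eq, Sym2.eq_swap] at hjc
  exact hjc.symm.trans hcj

lemma mem_branch_of_reachable {c j t t' : ι} (h : (T.deleteIncidenceSet c).Reachable t t')
    (ht' : t' ∈ T.branch c j) : t ∈ T.branch c j := by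
  refine (h.mono fun x y hxy => ?_).trans ht'
  rw [deleteIncidenceSet_adj] at hxy
  refine deleteEdges_adj.mpr ⟨hxy.1, ?_⟩
  simp only [Set.mem_singleton_iff, Sym2.eq_iff]
  tauto

/-- Sending each node to the edge towards a heavy branch would inject the nodes of the tree into
its edges, as two adjacent nodes cannot point at each other. -/
lemma IsTree.exists_balanced_node [Fintype ι] (hT : T.IsTree) {α : Type*} (τ : α → ι)
    (R : Finset α) :
    ∃ c, ∀ j, T.Adj c j → 2 * #{v ∈ R | τ v ∈ T.branch c j} ≤ #R := by
  by_contra! hheavy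
  choose f hadj hw using hheavy
  have hinj : Function.Injective fun c =>
      (⟨s(c, f c), mem_edgeFinset.mpr (hadj c)⟩ : T.edgeFinset) := by
    intro c c' hcc
    simp only [Subtype.mk_eq_mk, Sym2.eq_iff] at hcc
    rcases hcc with ⟨rfl, -⟩ | ⟨rfl, hfc⟩
    · rfl
    · have hsub :
          {v ∈ R | τ v ∈ T.branch (f c') c'} ⊆ {v ∈ R | τ v ∉ T.branch c' (f c')} :=
        monotone_filter_right R fun v _ hv =>
          Set.disjoint_right.mp (hT.disjoint_branch (hadj c')) hv
      have := card_le_card hsub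
      have := card_filter_add_card_filter_not (s := R) (fun v => τ v ∈ T.branch c' (f c'))
      have := hw c'
      have := hw (f c')
      rw [hfc] at this
      omega
  have := Fintype.card_le_of_injective _ hinj
  rw [Fintype.card_coe] at this
  have := hT.card_edgeFinset
  have : 0 < Fintype.card ι := Fintype.card_pos_iff.mpr hT.1.nonempty
  omega

lemma exists_adj_reachable_deleteIncidenceSet {c t : ι} (p : T.Walk t c) (ht : t ≠ c) :
    ∃ j, T.Adj c j ∧ (T.deleteIncidenceSet c).Reachable t j := by
  induction p with
  | nil => exact absurd rfl ht
  | @cons t u c h q ih =>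
    by_cases hu : u = c
    · subst hu
      exact ⟨t, h.symm, .rfl⟩
    · obtain ⟨j, hcj, hreach⟩ := ih hu
      exact ⟨j, hcj, (deleteIncidenceSet_adj.mpr ⟨h, ht, hu⟩).reachable.trans hreach⟩

lemma Connected.reachable_deleteIncidenceSet {s : Set ι} (hs : (T.induce s).Connected) {c : ι}
    (hc : c ∉ s) {t t' : ι} (ht : t ∈ s) (ht' : t' ∈ s) :
    (T.deleteIncidenceSet c).Reachable t t' :=
  (hs ⟨t, ht⟩ ⟨t', ht'⟩).map
    ⟨Subtype.val, fun {x y} h => deleteIncidenceSet_adj.mpr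
      ⟨h, fun (hx : x.1 = c) => hc (hx ▸ x.2), fun (hy : y.1 = c) => hc (hy ▸ y.2)⟩⟩

end Tree

section Component

variable {V : Type*} (G : SimpleGraph V)

noncomputable def componentIn (X : Finset V) (a : V) : Finset V :=
  {v ∈ X | ∃ p : G.Walk a v, ∀ z ∈ p.support, z ∈ X}

variable {G} {X : Finset V} {a v : V}

lemma mem_componentIn_of_walk (p : G.Walk a v) (hp : ∀ z ∈ p.support, z ∈ X) :
    v ∈ G.componentIn X a :=
  mem_filter.mpr ⟨hp v p.end_mem_support, p, hp⟩

lemma self_mem_componentIn (ha : a ∈ X) : a ∈ G.componentIn X a :=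
  mem_componentIn_of_walk .nil (by simpa using ha)

lemma componentIn_subset : G.componentIn X a ⊆ X := filter_subset _ _

lemma componentIn_eq_of_mem (hv : v ∈ G.componentIn X a) :
    G.componentIn X v = G.componentIn X a := by
  obtain ⟨-, p, hp⟩ := mem_filter.mp hv
  ext w
  constructor <;> intro hw <;> obtain ⟨-, q, hq⟩ := mem_filter.mp hw
  · refine mem_componentIn_of_walk (p.append q) fun z hz => ?_
    rcases (Walk.mem_support_append_iff _ _).mp hz with hz | hz
    exacts [hp z hz, hq z hz]
  · refine mem_componentIn_of_walk (p.reverse.append q) fun z hz => ?_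
    rcases (Walk.mem_support_append_iff _ _).mp hz with hz | hz
    exacts [hp z (by simpa using hz), hq z hz]

lemma sum_card_componentIn_le (X : Finset V) :
    ∑ C ∈ X.image (G.componentIn X), #C ≤ #X := by
  rw [card_eq_sum_card_image (G.componentIn X) X]
  refine sum_le_sum fun C hC => card_le_card fun v hv => ?_
  obtain ⟨a, -, rfl⟩ := mem_image.mp hC
  exact mem_filter.mpr ⟨componentIn_subset hv, componentIn_eq_of_mem hv⟩

end Component

end SimpleGraph

namespace TreeDecomp

variable {V ι : Type*} {G : SimpleGraph V} (D : TreeDecomp G ι)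

lemma reachable_of_walk {c : ι} {u w : V} (p : G.Walk u w)
    (hp : ∀ z ∈ p.support, z ∉ D.bag c) {t t' : ι} (ht : u ∈ D.bag t)
    (ht' : w ∈ D.bag t') :
    (D.tree.deleteIncidenceSet c).Reachable t t' := by
  induction p generalizing t with
  | nil => exact (D.bag_conn _).reachable_deleteIncidenceSet (hp _ (by simp)) ht ht'
  | cons h q ih =>
    obtain ⟨i, hui, hvi⟩ := D.bag_edge h
    exact ((D.bag_conn _).reachable_deleteIncidenceSet (hp _ (by simp)) ht hui).trans
      (ih (fun z hz => hp z (by simp [hz])) hvi ht')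

/-- The bag at a centroid, for the weights counting the vertices of `R` assigned to each node, is
a balanced separator: a component of `R` minus the bag stays in one branch at the centroid. -/
theorem exists_balanced_separator [Finite V] [Fintype ι] {k : ℕ}
    (hD : ∀ i, (D.bag i).ncard ≤ k + 1) (R : Finset V) :
    ∃ S : Finset V, #S ≤ k + 1 ∧ ∀ a ∈ R \ S, 2 * #(G.componentIn (R \ S) a) ≤ #R := by
  have hbag (v : V) : ∃ i, v ∈ D.bag i :=
    let ⟨⟨i, hi⟩⟩ := (D.bag_conn v).nonempty
    ⟨i, hi⟩
  choose τ hτ using hbag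
  obtain ⟨c, hc⟩ := D.isTree.exists_balanced_node τ R
  refine ⟨{v ∈ R | v ∈ D.bag c}, ?_, fun a ha => ?_⟩
  · rw [← Set.ncard_coe_finset]
    exact (Set.ncard_le_ncard (fun v hv => (mem_filter.mp hv).2) (Set.toFinite _)).trans (hD c)
  have hnot (z : V) (hz : z ∈ R \ {v ∈ R | v ∈ D.bag c}) : z ∉ D.bag c := by
    simp_all
  have hτa : τ a ≠ c := fun h => hnot a ha (h ▸ hτ a)
  obtain ⟨p⟩ := D.isTree.1.preconnected (τ a) c
  obtain ⟨j, hcj, hj⟩ := exists_adj_reachable_deleteIncidenceSet p hτa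
  refine le_trans (Nat.mul_le_mul_left 2 (card_le_card fun v hv => ?_)) (hc j hcj)
  obtain ⟨hvR, q, hq⟩ := mem_filter.mp hv
  refine mem_filter.mpr ⟨(mem_sdiff.mp hvR).1,
    mem_branch_of_reachable ?_ (mem_branch_of_reachable hj .rfl)⟩
  exact (D.reachable_of_walk q (fun z hz => hnot z (hq z hz)) (hτ a) (hτ v)).symm

end TreeDecomp

theorem hasTreewidthAtMost_treewidth {V : Type*} [Fintype V] (G : SimpleGraph V) :
    HasTreewidthAtMost G (treewidth G) := by
  have hone : HasTreewidthAtMost G (Fintype.card V) := by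
    refine ⟨Unit, inferInstance,
      { tree := ⊥
        isTree := .of_subsingleton
        bag := fun _ => Set.univ
        bag_conn := fun v =>
          have : Nonempty {i : Unit | v ∈ Set.univ} := ⟨⟨(), Set.mem_univ v⟩⟩
          .of_subsingleton
        bag_edge := fun u v _ => ⟨(), Set.mem_univ u, Set.mem_univ v⟩ }, fun _ => ?_⟩
    rw [Set.ncard_univ, Nat.card_eq_fintype_card]
    exact Nat.le_succ _
  exact Nat.sInf_mem (s := {k | HasTreewidthAtMost G k}) ⟨_, hone⟩

namespace SimpleGraph

variable {V : Type*} {G : SimpleGraph V}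

/-- The query `q = (u, v)` certifies the non-edge `{a, b}`, i.e. `{a, b} ∈ S_{u,v}(G)`: were `ab`
an edge, `δ(u, v) ≤ δ(u, a) + 1 + δ(b, v)` would hold for both orientations. -/
def Certifies (G : SimpleGraph V) (q : V × V) (a b : V) : Prop :=
  G.dist q.1 a + G.dist b q.2 + 1 < G.dist q.1 q.2 ∨
    G.dist q.1 b + G.dist a q.2 + 1 < G.dist q.1 q.2

lemma Connected.exists_adj_dist_add_one_lt (hG : G.Connected) {a b s : V} (q : G.Walk a s)
    (hq : 2 * q.length ≤ G.dist a b) (hab : 2 ≤ G.dist a b) :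
    ∃ x, (x = s ∨ G.Adj s x) ∧ G.dist x a + 1 < G.dist x b := by
  refine ⟨q.penultimate, ?_, ?_⟩
  · cases q with
    | nil => exact .inl rfl
    | cons h q => exact .inr (Walk.adj_penultimate Walk.not_nil_cons).symm
  · have hxa : G.dist a q.penultimate ≤ q.length - 1 := q.length_dropLast ▸ dist_le q.dropLast
    have := hG.dist_triangle (u := a) (v := q.penultimate) (w := b)
    have := G.dist_comm (u := a) (v := q.penultimate)
    omega

/-- Whichever half of the geodesic contains `s`, the neighbour of `s` towards the near end is
closer to that end than to the other by at least two. -/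
lemma Connected.exists_certifies_of_mem_support (hG : G.Connected) {a b s : V} (p : G.Walk a b)
    (hp : p.length = G.dist a b) (h2 : 2 ≤ p.length) (hs : s ∈ p.support) :
    ∃ x, (x = s ∨ G.Adj s x) ∧ (G.Certifies (x, b) a b ∨ G.Certifies (x, a) a b) := by
  have hlen := congrArg Walk.length (p.take_spec hs)
  rw [Walk.length_append] at hlen
  rcases le_total (2 * (p.takeUntil s hs).length) (G.dist a b) with h | h
  · obtain ⟨x, hx, hd⟩ := hG.exists_adj_dist_add_one_lt (p.takeUntil s hs) h (hp ▸ h2)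
    exact ⟨x, hx, .inl (.inl (by simpa using hd))⟩
  · obtain ⟨x, hx, hd⟩ := hG.exists_adj_dist_add_one_lt (b := a) (p.dropUntil s hs).reverse
      (by rw [Walk.length_reverse, dist_comm]; omega) (by rw [dist_comm]; omega)
    exact ⟨x, hx, .inr (.inr (by simpa using hd))⟩

variable (G) in
def CertifiesGeodesicsIn (T : Finset (V × V)) (R : Finset V) : Prop :=
  ∀ a b (p : G.Walk a b), p.length = G.dist a b → 2 ≤ p.length →
    (∀ z ∈ p.support, z ∈ R) → ∃ q ∈ T, G.Certifies q a b

lemma Connected.two_le_dist (hG : G.Connected) {a b : V} (hab : a ≠ b) (hnadj : ¬ G.Adj a b) :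
    2 ≤ G.dist a b := by
  have := hG.pos_dist_of_ne hab
  have := mt dist_eq_one_iff_adj.mp hnadj
  omega

variable [Fintype V] [DecidableRel G.Adj]

variable (G) in
noncomputable def closedNeighborFinset (S : Finset V) : Finset V :=
  S ∪ S.biUnion fun s => G.neighborFinset s

lemma card_closedNeighborFinset_le {Δ : ℕ} (hΔ : G.maxDegree ≤ Δ) (S : Finset V) :
    #(G.closedNeighborFinset S) ≤ #S * (Δ + 1) := by
  have hdeg : ∑ s ∈ S, #(G.neighborFinset s) ≤ #S * Δ :=
    sum_le_card_nsmul _ _ _ fun s _ => (G.card_neighborFinset_eq_degree s).symm ▸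
      (G.degree_le_maxDegree s).trans hΔ
  calc #(G.closedNeighborFinset S) ≤ #S + #(S.biUnion fun s => G.neighborFinset s) :=
        card_union_le _ _
    _ ≤ #S + #S * Δ := by grw [card_biUnion_le, hdeg]
    _ = #S * (Δ + 1) := by ring

lemma mem_closedNeighborFinset {S : Finset V} {s x : V} (hs : s ∈ S) (hx : x = s ∨ G.Adj s x) :
    x ∈ G.closedNeighborFinset S := by
  rcases hx with rfl | hadj
  · exact mem_union_left _ hs
  · exact mem_union_right _ (mem_biUnion.mpr ⟨s, hs, (G.mem_neighborFinset s x).mpr hadj⟩)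

/-- A geodesic of `R` meeting `S` is certified by a query from a vertex of `N[S]` to one of its
ends; a geodesic avoiding `S` runs inside a single component of `R \ S`. -/
theorem Connected.certifiesGeodesicsIn_of_separator (hG : G.Connected) (R S : Finset V)
    (f : Finset V → Finset (V × V))
    (hf : ∀ a ∈ R \ S,
      G.CertifiesGeodesicsIn (f (G.componentIn (R \ S) a)) (G.componentIn (R \ S) a)) :
    G.CertifiesGeodesicsIn
      (G.closedNeighborFinset S ×ˢ R ∪ ((R \ S).image (G.componentIn (R \ S))).biUnion f)
      R := by
  intro a b p hp h2 hR
  by_cases hS : ∃ s ∈ p.support, s ∈ S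
  · obtain ⟨s, hs, hsS⟩ := hS
    obtain ⟨x, hx, hcert⟩ := hG.exists_certifies_of_mem_support p hp h2 hs
    have hxN := mem_closedNeighborFinset hsS hx
    rcases hcert with h | h
    · exact ⟨(x, b), mem_union_left _ (mem_product.mpr ⟨hxN, hR b p.end_mem_support⟩), h⟩
    · exact ⟨(x, a), mem_union_left _ (mem_product.mpr ⟨hxN, hR a p.start_mem_support⟩), h⟩
  · push Not at hS
    have hX (z : V) (hz : z ∈ p.support) : z ∈ R \ S := mem_sdiff.mpr ⟨hR z hz, hS z hz⟩
    have ha := hX a p.start_mem_support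
    have hC (z : V) (hz : z ∈ p.support) : z ∈ G.componentIn (R \ S) a :=
      mem_componentIn_of_walk (p.takeUntil z hz) fun y hy =>
        hX y (p.support_takeUntil_subset_support hz hy)
    obtain ⟨q, hq, hcert⟩ := hf a ha a b p hp h2 hC
    exact ⟨q, mem_union_right _ (mem_biUnion.mpr ⟨_, mem_image_of_mem _ ha, hq⟩), hcert⟩

/-- Recursing into the components of `R \ S` halves the size, so each vertex of `R` is charged
`k (Δ + 1)` queries on each of at most `log₂ |R| + 1` levels. -/
theorem Connected.exists_certifiesGeodesicsIn (hG : G.Connected) {k Δ : ℕ}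
    (hΔ : G.maxDegree ≤ Δ)
    (hsep : ∀ R : Finset V, ∃ S : Finset V, #S ≤ k ∧
      ∀ a ∈ R \ S, 2 * #(G.componentIn (R \ S) a) ≤ #R)
    (R : Finset V) :
    ∃ T : Finset (V × V), #T ≤ k * (Δ + 1) * #R * (Nat.log 2 #R + 1) ∧
      G.CertifiesGeodesicsIn T R := by
  induction R using Finset.strongInduction with
  | H R ih =>
  obtain ⟨S, hSk, hS⟩ := hsep R
  set 𝒞 := (R \ S).image (G.componentIn (R \ S))
  have hsmall (C : Finset V) (hC : C ∈ 𝒞) : 0 < #C ∧ 2 * #C ≤ #R := by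
    obtain ⟨a, ha, rfl⟩ := mem_image.mp hC
    exact ⟨card_pos.mpr ⟨a, self_mem_componentIn ha⟩, hS a ha⟩
  have hrec (C : Finset V) (hC : C ∈ 𝒞) : ∃ T : Finset (V × V),
      #T ≤ k * (Δ + 1) * #C * (Nat.log 2 #C + 1) ∧ G.CertifiesGeodesicsIn T C := by
    obtain ⟨a, -, rfl⟩ := mem_image.mp hC
    refine ih _ (ssubset_of_subset_of_ne (componentIn_subset.trans sdiff_subset) fun h => ?_)
    have := hsmall _ hC
    rw [h] at this
    omega
  choose! f hf_card hf_cert using hrec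
  refine ⟨G.closedNeighborFinset S ×ˢ R ∪ 𝒞.biUnion f, ?_,
    hG.certifiesGeodesicsIn_of_separator R S f fun a ha => hf_cert _ (mem_image_of_mem _ ha)⟩
  have hcomp : ∑ C ∈ 𝒞, #C ≤ #R :=
    (sum_card_componentIn_le _).trans (card_le_card sdiff_subset)
  calc _ ≤ #S * (Δ + 1) * #R + ∑ C ∈ 𝒞, #(f C) := by
        grw [card_union_le, card_product, card_biUnion_le,
          card_closedNeighborFinset_le hΔ]
    _ ≤ k * (Δ + 1) * #R + ∑ C ∈ 𝒞, k * (Δ + 1) * Nat.log 2 #R * #C := by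
        gcongr with C hC
        grw [hf_card C hC, Nat.log_two_add_one_le_of_two_mul_le (hsmall C hC).1 (hsmall C hC).2]
        exact le_of_eq (by ring)
    _ ≤ k * (Δ + 1) * #R * (Nat.log 2 #R + 1) := by
        rw [← mul_sum]
        grw [hcomp]
        exact le_of_eq (by ring)

lemma Connected.one_le_maxDegree [Nontrivial V] (hG : G.Connected) : 1 ≤ G.maxDegree :=
  let ⟨v, _, _⟩ := exists_pair_ne V
  (hG.preconnected.degree_pos_of_nontrivial v).trans_le (G.degree_le_maxDegree v)

end SimpleGraph

lemma Nat.log_two_add_one_le_three_mul_log {n : ℕ} (hn : 2 ≤ n) :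
    (Nat.log 2 n + 1 : ℝ) ≤ 3 * Real.log n := by
  have hlog2 := Real.log_two_gt_d9
  have hlogn : Real.log 2 ≤ Real.log n := Real.log_le_log two_pos (by exact_mod_cast hn)
  have hpow : Nat.log 2 n * Real.log 2 ≤ Real.log n := by
    rw [← Real.log_pow]
    exact Real.log_le_log (by positivity) (by exact_mod_cast Nat.pow_log_le_self 2 (by omega))
  nlinarith

lemma add_one_mul_add_one_mul_log_le {Δ tw n : ℕ} (hΔ : 1 ≤ Δ) (hn : 2 ≤ n) :
    ((tw + 1) * (Δ + 1) * n * (Nat.log 2 n + 1) : ℕ) ≤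
      12 * Δ * (Δ + tw * Real.log n) * n * Real.log n := by
  have hL := Nat.log_two_add_one_le_three_mul_log hn
  have hhalf : (1 / 2 : ℝ) ≤ Real.log n := by
    linarith [Real.log_two_gt_d9, Real.log_le_log two_pos (Nat.ofNat_le_cast.mpr hn)]
  have hΔ' : (1 : ℝ) ≤ Δ := by exact_mod_cast hΔ
  push_cast
  calc ((tw : ℝ) + 1) * (Δ + 1) * n * (Nat.log 2 n + 1)
      ≤ (2 * (Δ + tw * Real.log n)) * (2 * Δ) * n * (3 * Real.log n) := by
        gcongr <;> nlinarith
    _ = 12 * Δ * (Δ + tw * Real.log n) * n * Real.log n := by ring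

theorem stmt_6 :
    ∃ c : ℝ, 0 < c ∧
      ∀ (V : Type) [Fintype V] (G : SimpleGraph V) [DecidableRel G.Adj] (Δ tw : ℕ),
        G.Connected → 2 ≤ Fintype.card V → G.maxDegree = Δ → treewidth G = tw →
        ∃ T : Set (V × V),
          (T.ncard : ℝ) ≤ c * Δ * (Δ + tw * Real.log (Fintype.card V)) *
              Fintype.card V * Real.log (Fintype.card V) ∧
          ∀ a b : V, a ≠ b → ¬ G.Adj a b →
            ∃ p ∈ T,
              G.dist p.1 a + G.dist b p.2 + 1 < G.dist p.1 p.2 ∨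
              G.dist p.1 b + G.dist a p.2 + 1 < G.dist p.1 p.2 := by
  refine ⟨12, by norm_num, fun V _ G _ Δ tw hG hn hΔ htw => ?_⟩
  have : Nontrivial V := Fintype.one_lt_card_iff_nontrivial.mp hn
  obtain ⟨ι, _, D, hD⟩ := htw ▸ hasTreewidthAtMost_treewidth G
  obtain ⟨T, hTcard, hT⟩ :=
    hG.exists_certifiesGeodesicsIn hΔ.le (D.exists_balanced_separator hD) univ
  refine ⟨T, ?_, fun a b hab hnadj => ?_⟩
  · rw [Set.ncard_coe_finset]
    rw [card_univ] at hTcard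
    exact (Nat.cast_le.mpr hTcard).trans
      (add_one_mul_add_one_mul_log_le (hΔ ▸ hG.one_le_maxDegree) hn)
  · obtain ⟨p, hp⟩ := hG.exists_walk_length_eq_dist a b
    exact hT a b p hp (hp ▸ hG.two_le_dist hab hnadj) fun z _ => mem_univ z
end

section
/- Let G = (V,E) be a finite connected chordal simple graph on n ≥ 1 vertices with maximum degree Δ. Then there exists a vertex v ∈ V such that the number of ordered pairs (a,b) ∈ V × V with δ(a,v) + δ(v,b) = δ(a,b) (i.e., v lies on some shortest path between a and b) is at least n²/(2(Δ+1)). -/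
/-!
A clique `C` of a chordal graph can be chosen so that every component of `G - C` has at most
`n / 2` vertices: take a clique minimising the largest component `A` it leaves; if `2|A| > n`,
chordality yields a vertex `u ∈ A` adjacent to all of `S := {c ∈ C | c has a neighbour in A}`
(by induction on `S`, as the penultimate vertex of a chordless path from `A` to the new vertex),
and every component of `G - (S ∪ {u})` is either inside `A \ {u}` or outside `A`, hence smaller
than `A`.
A pair `(a, b)` all of whose shortest paths avoid `C` has `a ∉ C` and `b` in the component of `a`
in `G - C`, so there are at most `n · n / 2` such pairs. The other pairs, at least `n² / 2` of
them, have a shortest path through some `c ∈ C`; as `|C| ≤ Δ + 1`, pigeonhole over `C` concludes.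
-/

open SimpleGraph

/-- A graph is chordal if every cycle of length greater than 3 has a chord. -/
def IsChordal {V : Type u} (G : SimpleGraph V) : Prop :=
  ∀ ⦃v : V⦄ (w : G.Walk v v), w.IsCycle → 3 < w.length →
    ∃ x y : V, x ∈ w.support ∧ y ∈ w.support ∧ G.Adj x y ∧ s(x, y) ∉ w.edges

namespace SimpleGraph.Walk

variable {V : Type*} {G : SimpleGraph V} {u v w x y : V}

theorem exists_length_lt_of_adj_of_notMem_edges {p : G.Walk u v} (hx : x ∈ p.support)
    (hy : y ∈ p.support) (hxy : G.Adj x y) (he : s(x, y) ∉ p.edges) :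
    ∃ q : G.Walk u v, q.support ⊆ p.support ∧ q.length < p.length := by
  obtain ⟨i, rfl, hi⟩ := mem_support_iff_exists_getVert.mp hx
  obtain ⟨j, rfl, hj⟩ := mem_support_iff_exists_getVert.mp hy
  clear hx hy
  wlog hij : i < j generalizing i j
  · have hji : j < i :=
      lt_of_le_of_ne (not_lt.mp hij) fun h => hxy.ne (congrArg p.getVert h.symm)
    exact this j hj i hi hxy.symm (Sym2.eq_swap ▸ he) hji
  have hsucc : i + 1 ≠ j := by
    rintro rfl
    exact he (p.mk_mem_edges_iff_exists.mpr ⟨i, by omega, rfl⟩)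
  refine ⟨(p.take i).append (cons hxy (p.drop j)), fun z hz => ?_, ?_⟩
  · simp only [support_append, support_cons, List.tail_cons, List.mem_append, support_take,
      drop_support_eq_support_drop_min] at hz
    exact hz.elim List.mem_of_mem_take List.mem_of_mem_drop
  · simp only [length_append, take_length, length_cons, drop_length]
    omega

theorem exists_isPath_isChordless_support_subset (p : G.Walk u v) :
    ∃ q : G.Walk u v, q.IsPath ∧ q.IsChordless ∧ q.support ⊆ p.support := by
  classical
  obtain ⟨q, hqp, hmin⟩ := (measure (length : G.Walk u v → ℕ)).wf.has_min
    {q | q.support ⊆ p.support} ⟨p, List.Subset.refl _⟩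
  have hmin' : ∀ r : G.Walk u v, r.support ⊆ q.support → q.length ≤ r.length := fun r hr =>
    not_lt.mp (hmin r (List.Subset.trans hr hqp))
  refine ⟨q, ?_, ?_, hqp⟩
  · rw [← bypass_eq_self_of_length_le_length_bypass q
      (hmin' _ (support_bypass_subset_support q))]
    exact bypass_isPath q
  · refine isChordless_iff_forall_mem_edges.mpr fun x y hx hy hxy => ?_
    by_contra he
    obtain ⟨r, hr, hlt⟩ := exists_length_lt_of_adj_of_notMem_edges hx hy hxy he
    exact (hmin' r hr).not_gt hlt

theorem IsChordless.of_cons {h : G.Adj u v} {q : G.Walk v w} (hc : (cons h q).IsChordless)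
    (hu : u ∉ q.support) : q.IsChordless := by
  refine isChordless_iff_forall_mem_edges.mpr fun x y hx hy hxy => ?_
  have := hc.mem_edges (List.mem_cons_of_mem _ hx) (List.mem_cons_of_mem _ hy) hxy
  rw [edges_cons, List.mem_cons] at this
  rcases this with he | he
  · rcases Sym2.eq_iff.mp he with ⟨rfl, -⟩ | ⟨-, rfl⟩
    exacts [absurd hx hu, absurd hy hu]
  · exact he

theorem dist_add_dist_of_length_eq_dist {a b c : V} {p : G.Walk a b}
    (hp : p.length = G.dist a b) (hc : c ∈ p.support) : G.dist a c + G.dist c b = G.dist a b := by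
  classical
  rw [← length_eq_dist_of_subwalk hp (p.isSubwalk_takeUntil hc),
    ← length_eq_dist_of_subwalk hp (p.isSubwalk_dropUntil hc), ← length_append, take_spec, hp]

end SimpleGraph.Walk

namespace SimpleGraph

variable {V : Type*} {G : SimpleGraph V} {s : Set V} {a b x y : V}

theorem Reachable.mem_of_forall_adj {H : SimpleGraph V} {P : Set V}
    (hP : ∀ ⦃x y⦄, H.Adj x y → x ∈ P → y ∈ P) (h : H.Reachable a b) (ha : a ∈ P) : b ∈ P := by
  obtain ⟨p⟩ := h
  induction p with
  | nil => exact ha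
  | cons hxy _ ih => exact ih (hP hxy ha)

theorem spanningCoe_induce_compl_adj :
    (G.induce sᶜ).spanningCoe.Adj x y ↔ G.Adj x y ∧ x ∉ s ∧ y ∉ s := by
  simp

/-- The vertex set of the component of `a` in `G - s`; it is `{a}` when `a ∈ s`. -/
def deleteVertsComponent (G : SimpleGraph V) (s : Set V) (a : V) : Set V :=
  {b | (G.induce sᶜ).spanningCoe.Reachable a b}

theorem notMem_of_mem_deleteVertsComponent (ha : a ∉ s) (hb : b ∈ G.deleteVertsComponent s a) :
    b ∉ s :=
  Reachable.mem_of_forall_adj (P := sᶜ) (fun _ _ h _ => (spanningCoe_induce_compl_adj.mp h).2.2)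
    hb ha

theorem mem_deleteVertsComponent_of_adj (hx : x ∈ G.deleteVertsComponent s a) (hxs : x ∉ s)
    (hys : y ∉ s) (hxy : G.Adj x y) : y ∈ G.deleteVertsComponent s a :=
  Reachable.trans hx (spanningCoe_induce_compl_adj.mpr ⟨hxy, hxs, hys⟩).reachable

theorem mem_deleteVertsComponent_of_walk (p : G.Walk a b) (hp : ∀ z ∈ p.support, z ∉ s) :
    b ∈ G.deleteVertsComponent s a := by
  induction p with
  | nil => exact Reachable.refl _
  | cons h q ih =>
    have hs := hp _ (Walk.start_mem_support _)
    have hs' := hp _ (List.mem_cons_of_mem _ q.start_mem_support)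
    exact Reachable.trans (spanningCoe_induce_compl_adj.mpr ⟨h, hs, hs'⟩).reachable
      (ih fun z hz => hp z (List.mem_cons_of_mem _ hz))

theorem exists_walk_support_subset_deleteVertsComponent (hx : x ∈ G.deleteVertsComponent s a)
    (hy : y ∈ G.deleteVertsComponent s a) :
    ∃ p : G.Walk x y, ∀ z ∈ p.support, z ∈ G.deleteVertsComponent s a := by
  classical
  obtain ⟨q⟩ := Reachable.trans (Reachable.symm hx) hy
  refine ⟨q.mapLe (spanningCoe_induce_le G _), fun z hz => ?_⟩
  rw [Walk.support_mapLe_eq_support] at hz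
  exact Reachable.trans hx (q.takeUntil z hz).reachable

theorem IsClique.card_le_maxDegree_add_one [Fintype V] [DecidableRel G.Adj] {C : Finset V}
    (hC : G.IsClique (C : Set V)) : C.card ≤ G.maxDegree + 1 := by
  classical
  obtain rfl | ⟨v, hv⟩ := C.eq_empty_or_nonempty
  · simp
  have hsub : C.erase v ⊆ G.neighborFinset v := fun c hc => by
    obtain ⟨hcv, hc⟩ := Finset.mem_erase.mp hc
    exact (G.mem_neighborFinset v c).mpr (hC hv hc hcv.symm)
  calc C.card = (C.erase v).card + 1 := (Finset.card_erase_add_one hv).symm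
    _ ≤ G.degree v + 1 := by
        rw [← card_neighborFinset_eq_degree]
        exact Nat.add_le_add_right (Finset.card_le_card hsub) 1
    _ ≤ G.maxDegree + 1 := Nat.add_le_add_right (G.degree_le_maxDegree v) 1

def geodesicPairs (G : SimpleGraph V) (v : V) : Set (V × V) :=
  {p | G.dist p.1 v + G.dist v p.2 = G.dist p.1 p.2}

theorem Connected.exists_mem_geodesicPairs_or_mem_deleteVertsComponent (hG : G.Connected)
    (s : Set V) (a b : V) :
    (∃ c ∈ s, (a, b) ∈ G.geodesicPairs c) ∨ a ∉ s ∧ b ∈ G.deleteVertsComponent s a := by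
  obtain ⟨p, hp⟩ := hG.exists_walk_length_eq_dist a b
  by_cases h : ∃ c ∈ p.support, c ∈ s
  · obtain ⟨c, hcp, hcs⟩ := h
    exact Or.inl ⟨c, hcs, Walk.dist_add_dist_of_length_eq_dist hp hcp⟩
  · push Not at h
    exact Or.inr ⟨h a p.start_mem_support, mem_deleteVertsComponent_of_walk p h⟩

theorem Connected.card_sq_le_two_mul_sum_ncard_geodesicPairs [Fintype V] (hG : G.Connected)
    {C : Finset V} (hbal : ∀ a ∉ C, 2 * (G.deleteVertsComponent C a).ncard ≤ Nat.card V) :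
    Nat.card V ^ 2 ≤ 2 * ∑ c ∈ C, (G.geodesicPairs c).ncard := by
  classical
  have hcover : (Set.univ : Set (V × V)) ⊆
      (⋃ c ∈ C, G.geodesicPairs c) ∪ ⋃ a ∈ Cᶜ, {a} ×ˢ G.deleteVertsComponent C a := by
    rintro ⟨a, b⟩ -
    rcases hG.exists_mem_geodesicPairs_or_mem_deleteVertsComponent C a b with
      ⟨c, hc, hab⟩ | ⟨ha, hb⟩
    · exact Or.inl (Set.mem_biUnion hc hab)
    · exact Or.inr (Set.mem_biUnion (Finset.mem_compl.mpr ha) ⟨rfl, hb⟩)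
  have hbad : 2 * ∑ a ∈ Cᶜ, ({a} ×ˢ G.deleteVertsComponent C a).ncard ≤ Nat.card V ^ 2 := by
    simp only [Set.ncard_prod, Set.ncard_singleton, one_mul, Finset.mul_sum]
    calc ∑ a ∈ Cᶜ, 2 * (G.deleteVertsComponent C a).ncard ≤ ∑ _a ∈ Cᶜ, Nat.card V :=
          Finset.sum_le_sum fun a ha => hbal a (Finset.mem_compl.mp ha)
      _ ≤ Nat.card V ^ 2 := by
          rw [Finset.sum_const, smul_eq_mul, sq, Nat.card_eq_fintype_card]
          exact Nat.mul_le_mul_right _ (Finset.card_le_univ _)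
  have hall : Nat.card V ^ 2 ≤ ∑ c ∈ C, (G.geodesicPairs c).ncard +
      ∑ a ∈ Cᶜ, ({a} ×ˢ G.deleteVertsComponent C a).ncard := by
    calc Nat.card V ^ 2 = (Set.univ : Set (V × V)).ncard := by
          rw [Set.ncard_univ, Nat.card_prod, sq]
      _ ≤ _ := (Set.ncard_le_ncard hcover).trans (Set.ncard_union_le _ _)
      _ ≤ _ := add_le_add (C.set_ncard_biUnion_le _) (Cᶜ.set_ncard_biUnion_le _)
  omega

end SimpleGraph

namespace IsChordal

open Walk

variable {V : Type*} {G : SimpleGraph V}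

theorem exists_adj_of_isChordless (hG : IsChordal G) {a b t : V} {p : G.Walk a b}
    (hp : p.IsPath) (hc : p.IsChordless) (hlen : 2 ≤ p.length) (ht : t ∉ p.support)
    (hta : G.Adj t a) (htb : G.Adj t b) : ∃ z ∈ p.support, z ≠ a ∧ z ≠ b ∧ G.Adj t z := by
  set W := cons hta (p.concat htb.symm)
  have hab : a ≠ b := by
    rintro rfl
    have := (isPath_iff_nil.mp hp).length_eq_zero
    omega
  have hsupp : ∀ z, z ∈ W.support ↔ z = t ∨ z ∈ p.support := by
    simp [W, support_concat, or_comm]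
  have hedges : W.edges = s(t, a) :: (p.edges ++ [s(b, t)]) := by
    simp [W, edges_concat]
  have hW : W.IsCycle := by
    refine (cons_isCycle_iff _ _).mpr ⟨hp.concat ht _, ?_⟩
    rw [edges_concat, List.concat_eq_append, List.mem_append, List.mem_singleton, not_or]
    refine ⟨fun h => ht (p.fst_mem_support_of_mem_edges h), fun h => ?_⟩
    rcases Sym2.eq_iff.mp h with ⟨rfl, rfl⟩ | ⟨-, rfl⟩
    exacts [G.irrefl hta, hab rfl]
  obtain ⟨x, y, hxW, hyW, hxy, hxyW⟩ := hG W hW (by simp [W]; omega)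
  have key : ∀ z ∈ p.support, G.Adj t z → s(t, z) ∉ W.edges →
      ∃ z ∈ p.support, z ≠ a ∧ z ≠ b ∧ G.Adj t z := fun z hz htz hzW =>
    ⟨z, hz, by rintro rfl; simp [hedges] at hzW,
      by rintro rfl; simp [hedges, Sym2.eq_swap] at hzW, htz⟩
  rcases (hsupp x).mp hxW with rfl | hx <;> rcases (hsupp y).mp hyW with rfl | hy
  · exact absurd hxy G.irrefl
  · exact key y hy hxy hxyW
  · exact key x hx hxy.symm (by rwa [Sym2.eq_swap])
  · exact (hxyW (hedges ▸ .tail _ (List.mem_append_left _ (hc.mem_edges hx hy hxy)))).elim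

theorem adj_penultimate_of_isChordless (hG : IsChordal G) {a b t c : V} {p : G.Walk a b}
    (hp : p.IsPath) (hc : p.IsChordless) (ht : t ∉ p.support) (htb : G.Adj t b)
    (hcp : c ∈ p.support) (hcb : c ≠ b) (htc : G.Adj t c) : G.Adj t p.penultimate := by
  induction p generalizing c with
  | nil => exact absurd (by simpa using hcp) hcb
  | @cons a a' b h q ih =>
    rw [cons_isPath_iff] at hp
    have hca : c = a ∨ c ∈ q.support := by simpa using hcp
    by_cases hq : q.Nil
    · cases hq
      obtain rfl : c = a := by simpa [hcb] using hca
      exact htc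
    rw [penultimate_cons_of_not_nil _ _ hq]
    by_cases hex : ∃ c' ∈ q.support, c' ≠ b ∧ G.Adj t c'
    · obtain ⟨c', hc'q, hc'b, htc'⟩ := hex
      exact ih hp.1 (hc.of_cons hp.2) (fun h => ht (List.mem_cons_of_mem _ h)) htb
        hc'q hc'b htc'
    push Not at hex
    obtain rfl : c = a := hca.resolve_right fun h => hex c h hcb htc
    have hlen : 2 ≤ (cons h q).length := by
      have := not_nil_iff_lt_length.mp hq
      simp only [length_cons]; omega
    obtain ⟨z, hz, hza, hzb, htz⟩ :=
      hG.exists_adj_of_isChordless ((cons_isPath_iff _ _).mpr hp) hc hlen ht htc htb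
    exact (hex z (by simpa [hza] using hz) hzb htz).elim

theorem exists_adj_forall_of_isClique (hG : IsChordal G) {A : Set V} (hA : A.Nonempty)
    (hAconn : ∀ x ∈ A, ∀ y ∈ A, ∃ p : G.Walk x y, ∀ z ∈ p.support, z ∈ A)
    {S : Finset V} (hS : G.IsClique (S : Set V)) (hSA : ∀ s ∈ S, s ∉ A)
    (hSadj : ∀ s ∈ S, ∃ x ∈ A, G.Adj s x) : ∃ u ∈ A, ∀ s ∈ S, G.Adj u s := by
  classical
  induction S using Finset.induction_on with
  | empty => exact ⟨hA.some, hA.some_mem, by simp⟩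
  | insert s S hsS ih =>
    obtain ⟨u', hu'A, hu'S⟩ := ih (hS.subset (by simp)) (fun t ht => hSA t (by simp [ht]))
      (fun t ht => hSadj t (by simp [ht]))
    have hsA : s ∉ A := hSA s (by simp)
    obtain ⟨x, hxA, hsx⟩ := hSadj s (by simp)
    obtain ⟨w, hw⟩ := hAconn u' hu'A x hxA
    obtain ⟨p, hp, hc, hpw⟩ := (w.concat hsx.symm).exists_isPath_isChordless_support_subset
    have hpA : ∀ z ∈ p.support, z = s ∨ z ∈ A := fun z hz => by
      have := hpw hz
      rw [support_concat, List.mem_append, List.mem_singleton] at this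
      exact this.symm.imp_right (hw z)
    have hus : G.Adj p.penultimate s := p.adj_penultimate fun h => hsA (h.eq ▸ hu'A)
    refine ⟨p.penultimate, (hpA _ (p.getVert_mem_support _)).resolve_left hus.ne, ?_⟩
    simp only [Finset.mem_insert, forall_eq_or_imp]
    refine ⟨hus, fun t ht => ?_⟩
    have hts : t ≠ s := fun h => hsS (h ▸ ht)
    have htp : t ∉ p.support := fun h => (hpA t h).elim hts (hSA t (by simp [ht]))
    exact (hG.adj_penultimate_of_isChordless hp hc htp (hS (by simp [ht]) (by simp) hts)
      p.start_mem_support (fun h => hsA (h ▸ hu'A)) (hu'S t ht).symm).symm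

theorem exists_isClique_ncard_deleteVertsComponent_lt [Finite V] (hG : IsChordal G)
    {C : Finset V} (hC : G.IsClique (C : Set V)) {a : V} (ha : a ∉ C)
    (hbig : Nat.card V < 2 * (G.deleteVertsComponent C a).ncard) :
    ∃ C' : Finset V, C'.Nonempty ∧ G.IsClique (C' : Set V) ∧
      ∀ b ∉ C', (G.deleteVertsComponent C' b).ncard < (G.deleteVertsComponent C a).ncard := by
  classical
  set A := G.deleteVertsComponent C a
  have hAC : ∀ x ∈ A, x ∉ C := fun x hx => notMem_of_mem_deleteVertsComponent ha hx
  set S := C.filter fun c => ∃ x ∈ A, G.Adj c x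
  have hSC : (S : Set V) ⊆ C := Finset.coe_subset.mpr (Finset.filter_subset _ _)
  obtain ⟨u, huA, huS⟩ := hG.exists_adj_forall_of_isClique ⟨a, Reachable.refl _⟩
    (fun x hx y hy => exists_walk_support_subset_deleteVertsComponent hx hy) (hC.subset hSC)
    (fun s hs hsA => hAC s hsA (Finset.mem_filter.mp hs).1)
    (fun s hs => (Finset.mem_filter.mp hs).2)
  refine ⟨insert u S, Finset.insert_nonempty _ _, ?_, fun b hb => ?_⟩
  · rw [Finset.coe_insert]
    exact (hC.subset hSC).insert fun c hc _ => huS c hc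
  have hclosed : ∀ ⦃x y⦄, (G.induce (↑(insert u S))ᶜ).spanningCoe.Adj x y → x ∈ A → y ∈ A := by
    intro x y hxy hx
    obtain ⟨hxy, -, hyS⟩ := spanningCoe_induce_compl_adj.mp hxy
    have hyC : y ∉ C := fun hyC => hyS (Finset.mem_insert_of_mem
      (Finset.mem_filter.mpr ⟨hyC, x, hx, hxy.symm⟩))
    exact mem_deleteVertsComponent_of_adj hx (hAC x hx) hyC hxy
  have hiff : ∀ y ∈ G.deleteVertsComponent (↑(insert u S) : Set V) b, y ∈ A ↔ b ∈ A :=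
    fun y hy => ⟨Reachable.mem_of_forall_adj hclosed (Reachable.symm hy),
      Reachable.mem_of_forall_adj hclosed hy⟩
  by_cases hbA : b ∈ A
  · calc _ ≤ (A \ {u}).ncard := Set.ncard_le_ncard fun y hy =>
          ⟨(hiff y hy).mpr hbA, fun hyu => notMem_of_mem_deleteVertsComponent hb hy
            (Set.mem_singleton_iff.mp hyu ▸ Finset.mem_insert_self u S)⟩
      _ < A.ncard := Set.ncard_sdiff_singleton_lt_of_mem huA
  · calc _ ≤ Aᶜ.ncard := Set.ncard_le_ncard fun y hy hyA => hbA ((hiff y hy).mp hyA)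
      _ < A.ncard := by have := Set.ncard_add_ncard_compl A; omega

theorem exists_isClique_balanced [Finite V] [Nonempty V] (hG : IsChordal G) :
    ∃ C : Finset V, C.Nonempty ∧ G.IsClique (C : Set V) ∧
      ∀ a ∉ C, 2 * (G.deleteVertsComponent C a).ncard ≤ Nat.card V := by
  by_contra! h
  obtain ⟨v⟩ := ‹Nonempty V›
  obtain ⟨⟨C, a⟩, ⟨hC, ha, hbig⟩, hmin⟩ :=
    (measure fun x : Finset V × V => (G.deleteVertsComponent x.1 x.2).ncard).wf.has_min
      {x | G.IsClique (x.1 : Set V) ∧ x.2 ∉ x.1 ∧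
        Nat.card V < 2 * (G.deleteVertsComponent x.1 x.2).ncard}
      (by
        obtain ⟨a, ha, hbig⟩ := h {v} (by simp) (by simp)
        exact ⟨({v}, a), by simp, ha, hbig⟩)
  obtain ⟨C', hC'ne, hC', hlt⟩ := hG.exists_isClique_ncard_deleteVertsComponent_lt hC ha hbig
  obtain ⟨b, hb, hbbig⟩ := h C' hC'ne hC'
  exact hmin (C', b) ⟨hC', hb, hbbig⟩ (hlt b hb)

end IsChordal

theorem stmt_14_general {V : Type u} [Fintype V] (G : SimpleGraph V) [DecidableRel G.Adj]
    (hG : G.Connected) (hchordal : IsChordal G) (Δ : ℕ) (hΔ : G.maxDegree = Δ) :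
    ∃ v : V,
      (Fintype.card V : ℝ) ^ 2 / (2 * (Δ + 1)) ≤
        ({p : V × V | G.dist p.1 v + G.dist v p.2 = G.dist p.1 p.2}.ncard : ℝ) := by
  have := hG.nonempty
  obtain ⟨C, hCne, hC, hbal⟩ := hchordal.exists_isClique_balanced
  obtain ⟨v, -, hv⟩ := C.exists_max_image (fun c => (G.geodesicPairs c).ncard) hCne
  refine ⟨v, ?_⟩
  have hcount : Fintype.card V ^ 2 ≤ (G.geodesicPairs v).ncard * (2 * (Δ + 1)) := by
    rw [← Nat.card_eq_fintype_card]
    calc Nat.card V ^ 2 ≤ 2 * ∑ c ∈ C, (G.geodesicPairs c).ncard :=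
          hG.card_sq_le_two_mul_sum_ncard_geodesicPairs hbal
      _ ≤ 2 * (C.card * (G.geodesicPairs v).ncard) := by
          gcongr
          exact C.sum_le_card_nsmul _ _ hv
      _ ≤ 2 * ((Δ + 1) * (G.geodesicPairs v).ncard) := by
          gcongr
          exact hΔ ▸ hC.card_le_maxDegree_add_one
      _ = (G.geodesicPairs v).ncard * (2 * (Δ + 1)) := by ring
  rw [div_le_iff₀ (by positivity)]
  exact_mod_cast hcount

theorem stmt_14 {V : Type u} [Fintype V] (G : SimpleGraph V) [DecidableRel G.Adj]
    (hG : G.Connected) (hchordal : IsChordal G) (Δ : ℕ) (hΔ : G.maxDegree = Δ)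
    (hn : 1 ≤ Fintype.card V) :
    ∃ v : V,
      (Fintype.card V : ℝ) ^ 2 / (2 * (Δ + 1)) ≤
        ({p : V × V | G.dist p.1 v + G.dist v p.2 = G.dist p.1 p.2}.ncard : ℝ) :=
  stmt_14_general G hG hchordal Δ hΔ
end

section
/- Let G = (V,E) be a finite connected simple graph, let U ⊆ V be self-contained in G, let S ⊆ U be a clique of G, and let C be a connected component of the subgraph of G induced on U ∖ S. Then the set C ∪ S is self-contained in G. -/
open SimpleGraph

/-- `U` is self-contained in `G`: every shortest path in `G` between vertices of `U`
stays inside `U`. -/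
def SelfContained {V : Type*} (G : SimpleGraph V) (U : Set V) : Prop :=
  ∀ x ∈ U, ∀ y ∈ U, ∀ z : V, G.dist x z + G.dist z y = G.dist x y → z ∈ U

/-!
Let `x, y ∈ C ∪ S` and let `z ∉ S` lie on a shortest `x`–`y` path; then `z ∈ U \ S`.
A shortest path cannot leave the clique `S` and come back to it, since any two vertices of
`S` are at distance at most `1`. Hence `S` misses every shortest path from `z` to one of the
endpoints, say `x`. Such a path lies in `U` (it is part of a shortest `x`–`y` path) and avoids `S`,
so it joins `z` to `x` inside `U \ S`; in particular `x ∉ S`, so `x ∈ C` and therefore `z ∈ C`.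
-/

namespace SimpleGraph

variable {V : Type*} {G : SimpleGraph V}

lemma dist_add_dist_eq_comm {x y z : V} :
    G.dist x z + G.dist z y = G.dist x y ↔ G.dist y z + G.dist z x = G.dist y x := by
  rw [G.dist_comm (u := x), G.dist_comm (u := z) (v := y), G.dist_comm (u := x), add_comm]

lemma Walk.dist_add_dist_of_mem_support {a b w : V} (p : G.Walk a b)
    (hp : p.length = G.dist a b) (hw : w ∈ p.support) :
    G.dist a w + G.dist w b = G.dist a b := by
  classical
  have hsplit := congrArg Walk.length (p.take_spec hw)
  rw [Walk.length_append] at hsplit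
  have h₁ : G.dist a w ≤ (p.takeUntil w hw).length := dist_le _
  have h₂ : G.dist w b ≤ (p.dropUntil w hw).length := dist_le _
  have h₃ := (p.takeUntil w hw).reachable.dist_triangle_left b
  omega

lemma Connected.dist_add_dist_eq_of_dist_add_dist_eq (hG : G.Connected) {x y z w : V}
    (hz : G.dist x z + G.dist z y = G.dist x y) (hw : G.dist x w + G.dist w z = G.dist x z) :
    G.dist x w + G.dist w y = G.dist x y := by
  have h₁ : G.dist w y ≤ G.dist w z + G.dist z y := hG.dist_triangle
  have h₂ : G.dist x y ≤ G.dist x w + G.dist w y := hG.dist_triangle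
  omega

lemma IsClique.dist_le_one {S : Set V} (hS : G.IsClique S) {s t : V} (hs : s ∈ S) (ht : t ∈ S) :
    G.dist s t ≤ 1 := by
  by_cases hst : s = t
  · simp [hst]
  · exact (dist_eq_one_iff_adj.mpr (hS hs ht hst)).le

lemma Connected.dist_add_dist_ne_of_isClique (hG : G.Connected) {S : Set V} (hS : G.IsClique S)
    {x y z s w : V} (hz : z ∉ S) (hs : s ∈ S) (hw : w ∈ S)
    (hxs : G.dist x s + G.dist s z = G.dist x z) (hyw : G.dist y w + G.dist w z = G.dist y z) :
    G.dist x z + G.dist z y ≠ G.dist x y := by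
  rw [dist_add_dist_eq_comm] at hyw
  have hsw := hS.dist_le_one hs hw
  have hsz : 0 < G.dist s z := hG.pos_dist_of_ne fun h => hz (h ▸ hs)
  have hzw : 0 < G.dist z w := hG.pos_dist_of_ne fun h => hz (h ▸ hw)
  have h₁ : G.dist x y ≤ G.dist x s + G.dist s y := hG.dist_triangle
  have h₂ : G.dist s y ≤ G.dist s w + G.dist w y := hG.dist_triangle
  omega

end SimpleGraph

lemma SelfContained.mem_supp_of_dist_add_dist_eq {V : Type*} {G : SimpleGraph V}
    (hG : G.Connected) {U S : Set V} (hU : SelfContained G U)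
    {c : (G.induce (U \ S)).ConnectedComponent} {x y z : V} (hx : x ∈ Subtype.val '' c.supp)
    (hy : y ∈ U) (hz : G.dist x z + G.dist z y = G.dist x y)
    (hS : ∀ s ∈ S, G.dist x s + G.dist s z ≠ G.dist x z) :
    z ∈ Subtype.val '' c.supp := by
  obtain ⟨⟨x, hxU, hxS⟩, hxc, rfl⟩ := hx
  obtain ⟨p, hp⟩ := hG.exists_walk_length_eq_dist x z
  have hpUS : ∀ w ∈ p.support, w ∈ U \ S := fun w hw =>
    have hxwz := p.dist_add_dist_of_mem_support hp hw
    ⟨hU x hxU y hy w (hG.dist_add_dist_eq_of_dist_add_dist_eq hz hxwz), fun hwS => hS w hwS hxwz⟩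
  refine ⟨⟨z, hpUS z p.end_mem_support⟩, ?_, rfl⟩
  rw [ConnectedComponent.mem_supp_iff] at hxc ⊢
  exact hxc ▸ (ConnectedComponent.sound (p.induce _ hpUS).reachable).symm

theorem stmt_15_general {V : Type*} (G : SimpleGraph V) (hG : G.Connected)
    (U : Set V) (hU : SelfContained G U) (S : Set V) (hSU : S ⊆ U)
    (hclique : G.IsClique S)
    (c : (G.induce (U \ S)).ConnectedComponent) :
    SelfContained G ((Subtype.val '' c.supp) ∪ S) := by
  have hmemU : ∀ v ∈ (Subtype.val '' c.supp) ∪ S, v ∈ U := by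
    rintro v (⟨⟨v, hv⟩, -, rfl⟩ | hv)
    exacts [hv.1, hSU hv]
  intro x hx y hy z hz
  by_cases hzS : z ∈ S
  · exact Or.inr hzS
  refine Or.inl ?_
  by_cases hxz : ∃ s ∈ S, G.dist x s + G.dist s z = G.dist x z
  · obtain ⟨s, hs, hxs⟩ := hxz
    have hyz : ∀ w ∈ S, G.dist y w + G.dist w z ≠ G.dist y z := fun w hw hyw =>
      hG.dist_add_dist_ne_of_isClique hclique hzS hs hw hxs hyw hz
    have hyC := hy.resolve_right fun hyS => hyz y hyS (by simp)
    exact hU.mem_supp_of_dist_add_dist_eq hG hyC (hmemU x hx) (dist_add_dist_eq_comm.mp hz) hyz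
  · push Not at hxz
    have hxC := hx.resolve_right fun hxS => hxz x hxS (by simp)
    exact hU.mem_supp_of_dist_add_dist_eq hG hxC (hmemU y hy) hz hxz

theorem stmt_15 {V : Type*} [Fintype V] (G : SimpleGraph V) (hG : G.Connected)
    (U : Set V) (hU : SelfContained G U) (S : Set V) (hSU : S ⊆ U)
    (hclique : G.IsClique S)
    (c : (G.induce (U \ S)).ConnectedComponent) :
    SelfContained G ((Subtype.val '' c.supp) ∪ S) :=
  stmt_15_general G hG U hU S hSU hclique c
end
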